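/- Let 0 < μ < 2/5 and let n ≥ 1 be an integer. Then G_n = Σ_{k=0}^{∞} C(−1/2, k) · I_{n,k} · μ^{2k}, where C(−1/2, k) denotes the generalized binomial coefficient, and the series converges. -/

import Mathlib

/-!
Expand `1/√(1 + (μt)²) = (1 + (μt)²)^(-1/2)` by Newton's binomial series. On `[0, π/2]` we have
`(μt)² ≤ (μπ/2)² < 1`, because `μ < 2/5` and `π < 5`. As the binomial series has radius of
convergence `1`, its `k`-th term is bounded, uniformly in `t`, by `|C(-1/2, k)| (μπ/2)^(2k)`, a
summable sequence, so dominated convergence allows integrating term by term.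
-/

open Real MeasureTheory

/-- The hyper-geometric integral `G_n = ∫₀^{π/2} t sin(nt)/√(1+(μt)²) dt`. -/
noncomputable def G (μ : ℝ) (n : ℕ) : ℝ :=
  ∫ t in (0:ℝ)..(π / 2), t * Real.sin ((n : ℝ) * t) / Real.sqrt (1 + (μ * t) ^ 2)

/-- `I_{n,k} = ∫₀^{π/2} t^{2k+1} sin(nt) dt`. -/
noncomputable def I (n k : ℕ) : ℝ :=
  ∫ t in (0:ℝ)..(π / 2), t ^ (2 * k + 1) * Real.sin ((n : ℝ) * t)

/-- Generalized binomial coefficient `C(x, k) = x(x-1)⋯(x-k+1)/k!`. -/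
noncomputable def genBinom (x : ℝ) (k : ℕ) : ℝ :=
  (∏ i ∈ Finset.range k, (x - (i : ℝ))) / (Nat.factorial k : ℝ)

open Set
open scoped NNReal

theorem genBinom_eq_choose (x : ℝ) (k : ℕ) : genBinom x k = Ring.choose x k := by
  rw [genBinom, Ring.choose_eq_smul, ← Polynomial.aeval_eq_smeval, Polynomial.aeval_def,
    Polynomial.eval₂_eq_eval_map, descPochhammer_map, descPochhammer_eval_eq_prod_range,
    smul_eq_mul, div_eq_inv_mul]

theorem Real.rpow_neg_one_half_eq_inv_sqrt {x : ℝ} (hx : 0 ≤ x) :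
    x ^ (-(1 : ℝ) / 2) = (√x)⁻¹ := by
  rw [sqrt_eq_rpow, neg_div, rpow_neg hx]

theorem Real.hasSum_choose_mul_pow (a : ℝ) {x : ℝ} (hx : |x| < 1) :
    HasSum (fun k => Ring.choose a k * x ^ k) ((1 + x) ^ a) := by
  have h := (one_add_rpow_hasFPowerSeriesOnBall_zero (a := a)).hasSum (y := x)
    (by simpa [edist_dist] using hx)
  simpa [binomialSeries, FormalMultilinearSeries.ofScalars_apply_eq, mul_comm] using h

theorem Real.summable_abs_choose_mul_pow (a : ℝ) {r : ℝ} (hr0 : 0 ≤ r) (hr : r < 1) :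
    Summable (fun k => |Ring.choose a k| * r ^ k) := by
  lift r to ℝ≥0 using hr0
  have := (binomialSeries ℝ a).summable_norm_mul_pow
    (lt_of_lt_of_le (by exact_mod_cast hr) binomialSeries_radius_ge_one)
  simpa [binomialSeries, FormalMultilinearSeries.ofScalars_norm] using this

theorem intervalIntegral.hasSum_choose_mul_integral_pow_mul (s : ℝ) {φ f : ℝ → ℝ} {a b r : ℝ}
    (hφ : Continuous φ) (hf : IntervalIntegrable f volume a b) (hr : r < 1)
    (hφr : ∀ t ∈ uIcc a b, |φ t| ≤ r) :
    HasSum (fun k => Ring.choose s k * ∫ t in a..b, φ t ^ k * f t)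
      (∫ t in a..b, (1 + φ t) ^ s * f t) := by
  have hr0 : 0 ≤ r := (abs_nonneg _).trans (hφr a left_mem_uIcc)
  simp only [← intervalIntegral.integral_const_mul]
  refine intervalIntegral.hasSum_integral_of_dominated_convergence
    (fun k t => |Ring.choose s k| * r ^ k * |f t|)
    (fun k => ((hφ.aestronglyMeasurable.pow k).mul hf.def'.aestronglyMeasurable).const_mul _)
    (fun k => ae_of_all _ fun t ht => ?_)
    (ae_of_all _ fun t _ => (summable_abs_choose_mul_pow s hr0 hr).mul_right _)
    ?_
    (ae_of_all _ fun t ht => ?_)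
  · have hφt := hφr t (uIoc_subset_uIcc ht)
    rw [norm_mul, norm_mul, norm_pow, Real.norm_eq_abs, Real.norm_eq_abs, Real.norm_eq_abs,
      ← mul_assoc]
    gcongr
  · simp only [tsum_mul_right]
    exact hf.abs.const_mul _
  · have hφt := hφr t (uIoc_subset_uIcc ht)
    simpa only [mul_assoc] using
      (hasSum_choose_mul_pow s (hφt.trans_lt hr)).mul_right (f t)

theorem G_series_general (μ : ℝ) (hμ0 : 0 < μ) (hμ : μ < 2 / 5) (n : ℕ) :
    HasSum (fun k : ℕ => genBinom (-(1:ℝ)/2) k * I n k * μ ^ (2 * k)) (G μ n) := by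
  have hμπ : μ * (π / 2) < 1 := by nlinarith [pi_lt_d2]
  have hbound : ∀ t ∈ uIcc 0 (π / 2), |(μ * t) ^ 2| ≤ (μ * (π / 2)) ^ 2 := by
    intro t ht
    rw [uIcc_of_le (by positivity)] at ht
    rw [abs_sq]
    gcongr
    exacts [mul_nonneg hμ0.le ht.1, ht.2]
  have hexpand := intervalIntegral.hasSum_choose_mul_integral_pow_mul (-(1:ℝ)/2)
    (f := fun t => t * sin (n * t)) (by fun_prop) (Continuous.intervalIntegrable (by fun_prop) _ _)
    (pow_lt_one₀ (by positivity) hμπ two_ne_zero) hbound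
  convert hexpand using 1
  · ext k
    have hterm : ∀ t : ℝ, ((μ * t) ^ 2) ^ k * (t * sin (n * t))
        = μ ^ (2 * k) * (t ^ (2 * k + 1) * sin (n * t)) := fun t => by ring
    simp only [hterm, intervalIntegral.integral_const_mul, genBinom_eq_choose, I]
    ring
  · unfold G
    congr 1
    ext t
    rw [rpow_neg_one_half_eq_inv_sqrt (by positivity)]
    ring

/-- For `0 < μ < 2/5` and `n ≥ 1`, the series `Σ_k C(-1/2, k) I_{n,k} μ^{2k}`
converges, with sum `G_n`. -/
theorem G_series (μ : ℝ) (hμ0 : 0 < μ) (hμ : μ < 2 / 5) (n : ℕ) (hn : 1 ≤ n) :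
    HasSum (fun k : ℕ => genBinom (-(1:ℝ)/2) k * I n k * μ ^ (2 * k)) (G μ n) :=
  G_series_general μ hμ0 hμ n
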